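/- arXiv:1605.06734 — 2 statements merged into one kernel-verified Lean document; each statement's English description precedes it below -/
import Mathlib

section
/- If αβ² + pβ + q = 0 and p² = 4αq (double root β = −p/(2α)), then both y₁(x) = E_α(βx) and y₂(x) = x E_α(αβx) solve y''(x) + p y'(αx) + q y(α²x) = 0. -/
/-- The exponent-like function `E_α`. -/
noncomputable def Ea (α : ℝ) (x : ℝ) : ℝ :=
  ∑' n : ℕ, α ^ (n * (n - 1) / 2) * x ^ n / (n.factorial : ℝ)

lemma Ea_summable {α : ℝ} (hα0 : 0 ≤ α) (hα1 : α ≤ 1) (x : ℝ) :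
    Summable (fun n : ℕ => α ^ (n * (n - 1) / 2) * x ^ n / (n.factorial : ℝ)) := by
  apply Summable.of_norm_bounded (Real.summable_pow_div_factorial |x|)
  intro n
  rw [norm_div, Real.norm_natCast]
  gcongr
  simp only [norm_mul, norm_pow]
  calc ‖α‖ ^ (n*(n-1)/2) * ‖x‖ ^ n ≤ 1 * ‖x‖ ^ n := by
        gcongr
        exact pow_le_one₀ (norm_nonneg _) (by rw [Real.norm_eq_abs, abs_le]; constructor <;> linarith)
    _ = |x| ^ n := by rw [one_mul, Real.norm_eq_abs]

lemma Ea_hasDerivAt {α : ℝ} (hα0 : 0 ≤ α) (hα1 : α ≤ 1) (x : ℝ) :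
    HasDerivAt (Ea α) (Ea α (α * x)) x := by
  set R : ℝ := |x| + 1 with hR
  have hR1 : 1 ≤ R := by have := abs_nonneg x; linarith
  have hxR : x ∈ Metric.ball (0 : ℝ) R := by
    simp only [Metric.mem_ball, dist_zero_right, Real.norm_eq_abs]
    linarith
  have hαabs : |α| ≤ 1 := by rw [abs_le]; constructor <;> linarith
  -- summable bound
  have hu : Summable (fun n : ℕ => (n : ℝ) * R ^ (n - 1) / n.factorial) := by
    rw [← summable_nat_add_iff 1]
    apply Summable.congr (Real.summable_pow_div_factorial R)
    intro n
    have h1 : ((n+1).factorial : ℝ) = (n+1) * n.factorial := by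
      rw [Nat.factorial_succ]; push_cast; ring
    have h2 : ((n:ℝ)+1) ≠ 0 := by positivity
    have h3 : (n.factorial : ℝ) ≠ 0 := Nat.cast_ne_zero.2 n.factorial_ne_zero
    show R ^ n / n.factorial = ((n+1 : ℕ) : ℝ) * R ^ (n + 1 - 1) / (n+1).factorial
    rw [h1]
    push_cast
    field_simp
  have hbound : ∀ (n : ℕ) (y : ℝ), y ∈ Metric.ball (0:ℝ) R →
      ‖α ^ (n * (n - 1) / 2) * ((n : ℝ) * y ^ (n - 1)) / n.factorial‖
        ≤ (n : ℝ) * R ^ (n - 1) / n.factorial := by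
    intro n y hy
    simp only [Metric.mem_ball, dist_zero_right, Real.norm_eq_abs] at hy
    rw [norm_div, Real.norm_natCast]
    gcongr
    simp only [norm_mul, Real.norm_natCast, norm_pow, Real.norm_eq_abs, Nat.abs_cast]
    calc |α| ^ (n*(n-1)/2) * ((n:ℝ) * |y| ^ (n-1)) ≤ 1 * ((n:ℝ) * R ^ (n-1)) := by
          have hyR : |y| ≤ R := le_of_lt hy
          gcongr
          exact pow_le_one₀ (abs_nonneg _) hαabs
      _ = (n:ℝ) * R ^ (n-1) := one_mul _
  have key : HasDerivAt (fun z : ℝ => ∑' n : ℕ, α ^ (n * (n - 1) / 2) * z ^ n / n.factorial)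
      (∑' n : ℕ, α ^ (n * (n - 1) / 2) * ((n : ℝ) * x ^ (n - 1)) / n.factorial) x := by
    exact hasDerivAt_tsum_of_isPreconnected
      (g := fun (n : ℕ) (z : ℝ) => α ^ (n * (n - 1) / 2) * z ^ n / n.factorial)
      (g' := fun (n : ℕ) (z : ℝ) => α ^ (n * (n - 1) / 2) * ((n : ℝ) * z ^ (n - 1)) / n.factorial)
      hu Metric.isOpen_ball ((convex_ball (0:ℝ) R).isPreconnected)
      (fun n y _ => ((hasDerivAt_pow n y).const_mul (α ^ (n * (n - 1) / 2))).div_const _)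
      hbound hxR (Ea_summable hα0 hα1 x) hxR
  have hsummable : Summable (fun n : ℕ =>
      α ^ (n * (n - 1) / 2) * ((n : ℝ) * x ^ (n - 1)) / n.factorial) :=
    Summable.of_norm_bounded hu (fun n => hbound n x hxR)
  have hscale : ∑' n : ℕ, α ^ (n * (n - 1) / 2) * ((n : ℝ) * x ^ (n - 1)) / n.factorial
      = Ea α (α * x) := by
    rw [hsummable.tsum_eq_zero_add]
    simp only [Nat.cast_zero, zero_mul, mul_zero, zero_div, zero_add]
    unfold Ea
    apply tsum_congr
    intro n
    rw [Nat.triangle_succ, pow_add]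
    have h1 : ((n+1).factorial : ℝ) = (n+1) * n.factorial := by
      rw [Nat.factorial_succ]; push_cast; ring
    have h2 : ((n:ℝ)+1) ≠ 0 := by positivity
    have h3 : (n.factorial : ℝ) ≠ 0 := Nat.cast_ne_zero.2 n.factorial_ne_zero
    rw [h1]
    rw [mul_pow]
    push_cast
    field_simp
  rw [hscale] at key
  exact key

lemma Ea_comp_hasDerivAt {α : ℝ} (hα0 : 0 ≤ α) (hα1 : α ≤ 1) (c x : ℝ) :
    HasDerivAt (fun t => Ea α (c * t)) (c * Ea α (α * (c * x))) x := by
  have h := (Ea_hasDerivAt hα0 hα1 (c * x)).comp x ((hasDerivAt_id x).const_mul c)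
  exact h.congr_deriv (by ring)

/-- In the double-root case `β = -p/(2α)`, `p² = 4αq`, both `y₁(x) = E_α(βx)`
and `y₂(x) = x E_α(αβx)` solve `y''(x) + p y'(αx) + q y(α²x) = 0`. -/
theorem second_order_double_root (α p q β : ℝ) (hα : 0 < α) (hα1 : α < 1)
    (hβ : β = -p / (2 * α)) (hpq : p ^ 2 = 4 * α * q) :
    let y₁ : ℝ → ℝ := fun x => Ea α (β * x)
    let y₂ : ℝ → ℝ := fun x => x * Ea α (α * β * x)
    (∀ x : ℝ, deriv (deriv y₁) x + p * deriv y₁ (α * x) + q * y₁ (α ^ 2 * x) = 0) ∧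
    (∀ x : ℝ, deriv (deriv y₂) x + p * deriv y₂ (α * x) + q * y₂ (α ^ 2 * x) = 0) := by
  intro y₁ y₂
  have hα0 := hα.le
  have hα1' := hα1.le
  have hαne : α ≠ 0 := hα.ne'
  have hp : p = -(2 * α * β) := by
    rw [hβ]; field_simp
  have hq : q = α * β ^ 2 := by
    have h4 : (4 * α) * q = (4 * α) * (α * β ^ 2) := by rw [← hpq, hp]; ring
    exact mul_left_cancel₀ (by positivity) h4
  have hd : ∀ c x : ℝ, HasDerivAt (fun t => Ea α (c * t)) (c * Ea α (α * (c * x))) x :=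
    Ea_comp_hasDerivAt hα0 hα1'
  have hd1 : deriv y₁ = fun x => β * Ea α (α * (β * x)) := by
    funext t; exact (hd β t).deriv
  have hd2 : ∀ x, deriv (deriv y₁) x = α * β * (β * Ea α (α * (α * β * x))) := by
    intro t
    rw [hd1]
    have h : HasDerivAt (fun s => β * Ea α (α * β * s))
        (β * (α * β * Ea α (α * (α * β * t)))) t := (hd (α * β) t).const_mul β
    have h' : (fun s => β * Ea α (α * (β * s))) = fun s => β * Ea α (α * β * s) := by
      funext s; ring_nf
    rw [h']
    rw [h.deriv]; ring
  have hd3 : deriv y₂ = fun x => Ea α (α * β * x) + x * (α * β * Ea α (α * (α * β * x))) := by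
    funext t
    exact ((hasDerivAt_id t).mul (hd (α * β) t)).deriv.trans (by simp only [id_eq]; ring)
  have hd4 : ∀ x, deriv (deriv y₂) x
      = 2 * (α * β) * Ea α (α * (α * β * x))
        + x * (α * β * (α * (α * β) * Ea α (α * (α * (α * β) * x)))) := by
    intro t
    rw [hd3]
    have h1 : HasDerivAt (fun s => Ea α (α * β * s))
        (α * β * Ea α (α * (α * β * t))) t := hd (α * β) t
    have h2 : HasDerivAt (fun s => s * (α * β * Ea α (α * (α * β) * s)))
        (1 * (α * β * Ea α (α * (α * β) * t))
          + t * (α * β * (α * (α * β) * Ea α (α * (α * (α * β) * t))))) t := by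
      exact (hasDerivAt_id t).mul ((hd (α * (α * β)) t).const_mul (α * β))
    have h : HasDerivAt (fun s => Ea α (α * β * s) + s * (α * β * Ea α (α * (α * β) * s)))
        (α * β * Ea α (α * (α * β * t))
          + (1 * (α * β * Ea α (α * (α * β) * t))
          + t * (α * β * (α * (α * β) * Ea α (α * (α * (α * β) * t)))))) t := h1.add h2
    have h' : (fun x => Ea α (α * β * x) + x * (α * β * Ea α (α * (α * β * x))))
        = fun s => Ea α (α * β * s) + s * (α * β * Ea α (α * (α * β) * s)) := by
      funext s; ring_nf
    rw [h', h.deriv]; ring_nf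
  constructor
  · intro x
    rw [hd2, hd1]
    show α * β * (β * Ea α (α * (α * β * x))) + p * (β * Ea α (α * (β * (α * x))))
      + q * Ea α (β * (α ^ 2 * x)) = 0
    have e1 : α * (β * (α * x)) = α * (α * β * x) := by ring
    have e2 : β * (α ^ 2 * x) = α * (α * β * x) := by ring
    rw [e1, e2, hp, hq]; ring
  · intro x
    rw [hd4, hd3]
    show 2 * (α * β) * Ea α (α * (α * β * x))
        + x * (α * β * (α * (α * β) * Ea α (α * (α * (α * β) * x))))
        + p * (Ea α (α * β * (α * x)) + α * x * (α * β * Ea α (α * (α * β * (α * x)))))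
        + q * (α ^ 2 * x * Ea α (α * β * (α ^ 2 * x))) = 0
    have e1 : α * β * (α * x) = α * (α * β * x) := by ring
    have e2 : α * (α * (α * β * x)) = α * (α * (α * β) * x) := by ring
    have e3 : α * β * (α ^ 2 * x) = α * (α * (α * β) * x) := by ring
    rw [e1, e2, e3, hp, hq]; ring
end

section
/- If r² + prα + qα³ ≠ 0, then y*(x) = (Aα³/(r² + prα + qα³)) E_α((r/α²) x) is a particular solution of y''(x) + p y'(αx) + q y(α²x) = A E_α(rx). -/
open scoped Nat

lemma Ea_eq (α x : ℝ) : Ea α x = ∑' n : ℕ, (α ^ (n * (n - 1) / 2) / n !) * x ^ n := by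
  unfold Ea; exact tsum_congr fun n => by ring

lemma coef_bound {α : ℝ} (hα0 : 0 ≤ α) (hα1 : α ≤ 1) (n : ℕ) :
    |α ^ (n * (n - 1) / 2) / (n ! : ℝ)| ≤ 1 / n ! := by
  rw [abs_div, abs_of_nonneg (pow_nonneg hα0 _), abs_of_nonneg (by positivity : (0:ℝ) ≤ n !)]
  gcongr
  exact pow_le_one₀ hα0 hα1

lemma tri_succ (n : ℕ) : (n + 1) * ((n + 1) - 1) / 2 = n * (n - 1) / 2 + n := by
  have h2 : (n+1).choose 2 = n.choose 1 + n.choose 2 := Nat.choose_succ_succ n 1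
  simp only [Nat.choose_two_right, Nat.choose_one_right, Nat.succ_eq_add_one, Nat.add_sub_cancel] at h2
  simp only [Nat.add_sub_cancel]
  omega

lemma summable_deriv_bound {α : ℝ} (hα0 : 0 ≤ α) (hα1 : α ≤ 1) (R : ℝ) (hR : 0 ≤ R) :
    Summable (fun n : ℕ => |α ^ (n * (n - 1) / 2) / (n ! : ℝ)| * (n * R ^ (n - 1))) := by
  apply (summable_nat_add_iff 1).mp
  refine Summable.of_nonneg_of_le (fun n => by positivity) (fun n => ?_)
    (Real.summable_pow_div_factorial R)
  have h1 : |α ^ ((n+1) * ((n+1) - 1) / 2) / ((n+1)! : ℝ)| ≤ 1 / (n+1)! :=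
    coef_bound hα0 hα1 (n+1)
  simp only [Nat.add_sub_cancel]
  calc |α ^ ((n+1) * ((n+1) - 1) / 2) / ((n+1)! : ℝ)| * ((n+1 : ℕ) * R ^ n)
      ≤ (1 / (n+1)!) * ((n+1 : ℕ) * R ^ n) := by
        have hx : (0:ℝ) ≤ (n+1 : ℕ) * R ^ n := by positivity
        exact mul_le_mul_of_nonneg_right (by simpa using h1) hx
    _ = R ^ n / n ! := by
        rw [Nat.factorial_succ]
        push_cast
        field_simp

lemma summable_Ea {α : ℝ} (hα0 : 0 ≤ α) (hα1 : α ≤ 1) (x : ℝ) :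
    Summable (fun n : ℕ => (α ^ (n * (n - 1) / 2) / (n ! : ℝ)) * x ^ n) := by
  apply Summable.of_norm
  refine Summable.of_nonneg_of_le (fun n => norm_nonneg _) (fun n => ?_)
    (Real.summable_pow_div_factorial |x|)
  rw [Real.norm_eq_abs, abs_mul, abs_pow]
  calc |α ^ (n * (n - 1) / 2) / (n ! : ℝ)| * |x| ^ n
      ≤ (1 / n !) * |x| ^ n :=
        mul_le_mul_of_nonneg_right (coef_bound hα0 hα1 n) (by positivity)
    _ = |x| ^ n / n ! := by ring

lemma hasDerivAt_Ea {α : ℝ} (hα0 : 0 < α) (hα1 : α ≤ 1) (x : ℝ) :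
    HasDerivAt (Ea α) (Ea α (α * x)) x := by
  set c : ℕ → ℝ := fun n => α ^ (n * (n - 1) / 2) / n ! with hc
  set R : ℝ := |x| + 1 with hRdef
  have hR : 0 ≤ R := by positivity
  have hxR : x ∈ Metric.ball (0 : ℝ) R := by
    simp [Real.dist_eq, hRdef]
  have hmem : ∀ y ∈ Metric.ball (0 : ℝ) R, |y| ≤ R := by
    intro y hy
    have := Metric.mem_ball.mp hy
    rw [Real.dist_eq, sub_zero] at this
    linarith
  have hbnd : ∀ (n : ℕ) (y : ℝ), |y| ≤ R →
      ‖c n * (n * y ^ (n - 1))‖ ≤ |c n| * (n * R ^ (n - 1)) := by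
    intro n y hy
    rw [Real.norm_eq_abs, abs_mul]
    refine mul_le_mul_of_nonneg_left ?_ (abs_nonneg _)
    rw [abs_mul, abs_pow, Nat.abs_cast]
    exact mul_le_mul_of_nonneg_left (pow_le_pow_left₀ (abs_nonneg y) hy _)
      (Nat.cast_nonneg n)
  have key : HasDerivAt (fun z => ∑' n, c n * z ^ n)
      (∑' n : ℕ, c n * (n * x ^ (n - 1))) x := by
    refine hasDerivAt_tsum_of_isPreconnected
      (u := fun n : ℕ => |c n| * (n * R ^ (n - 1)))
      (summable_deriv_bound hα0.le hα1 R hR) Metric.isOpen_ball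
      ((convex_ball 0 R).isPreconnected)
      (fun n y _ => (hasDerivAt_pow n y).const_mul (c n))
      (fun n y hy => hbnd n y (hmem y hy)) (Metric.mem_ball_self (by positivity))
      (summable_Ea hα0.le hα1 0) hxR
  have hEaeq : (fun z => ∑' n, c n * z ^ n) = Ea α := by
    funext z; exact (Ea_eq α z).symm
  rw [hEaeq] at key
  convert key using 1
  have hsum : Summable fun n : ℕ => c n * (n * x ^ (n - 1)) := by
    apply Summable.of_norm
    refine Summable.of_nonneg_of_le (fun n => norm_nonneg _) (fun n => ?_)
      (summable_deriv_bound hα0.le hα1 R hR)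
    exact hbnd n x (by linarith [abs_nonneg x])
  rw [Summable.tsum_eq_zero_add hsum]
  simp only [Nat.cast_zero, zero_mul, mul_zero, zero_add]
  rw [Ea_eq]
  refine (tsum_congr fun n => ?_).symm
  simp only [hc, Nat.add_sub_cancel]
  have ht := tri_succ n
  simp only [Nat.add_sub_cancel] at ht
  rw [ht, pow_add, Nat.factorial_succ, mul_pow]
  have hfac : ((n ! : ℝ)) ≠ 0 := by positivity
  push_cast
  field_simp

lemma hasDerivAt_Ea_comp {α : ℝ} (hα0 : 0 < α) (hα1 : α ≤ 1) (k t : ℝ) :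
    HasDerivAt (fun s => Ea α (k * s)) (k * Ea α (α * k * t)) t := by
  have h := (hasDerivAt_Ea hα0 hα1 (k * t)).comp t ((hasDerivAt_id t).const_mul k)
  have : Ea α (α * (k * t)) * (k * 1) = k * Ea α (α * k * t) := by ring_nf
  rw [← this]
  simpa [Function.comp_def] using h

/-- If `r² + prα + qα³ ≠ 0`, then `y*(x) = (Aα³/(r² + prα + qα³)) E_α((r/α²)x)`
is a particular solution of `y''(x) + p y'(αx) + q y(α²x) = A E_α(rx)`. -/
theorem nonhomogeneous_particular_solution (α p q A r : ℝ) (hα : 0 < α) (hα1 : α < 1)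
    (h : r ^ 2 + p * r * α + q * α ^ 3 ≠ 0) :
    let y : ℝ → ℝ := fun x =>
      A * α ^ 3 / (r ^ 2 + p * r * α + q * α ^ 3) * Ea α (r / α ^ 2 * x)
    ∀ x : ℝ, deriv (deriv y) x + p * deriv y (α * x) + q * y (α ^ 2 * x)
      = A * Ea α (r * x) := by
  intro y x
  have hle : α ≤ 1 := le_of_lt hα1
  have hα' : α ≠ 0 := ne_of_gt hα
  set C : ℝ := A * α ^ 3 / (r ^ 2 + p * r * α + q * α ^ 3) with hC
  set k : ℝ := r / α ^ 2 with hk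
  have h1 : deriv y = fun t => C * (k * Ea α (α * k * t)) :=
    funext fun t => ((hasDerivAt_Ea_comp hα hle k t).const_mul C).deriv
  have h2 : HasDerivAt (fun t => C * (k * Ea α (α * k * t)))
      (C * (k * ((α * k) * Ea α (α * (α * k) * x)))) x :=
    (((hasDerivAt_Ea_comp hα hle (α * k) x).const_mul k).const_mul C)
  have h3 : y (α ^ 2 * x) = C * Ea α (k * (α ^ 2 * x)) := rfl
  rw [h1, h2.deriv, h3]
  simp only
  have e1 : α * (α * k) * x = r * x := by rw [hk]; field_simp
  have e2 : α * k * (α * x) = r * x := by rw [hk]; field_simp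
  have e3 : k * (α ^ 2 * x) = r * x := by rw [hk]; field_simp
  rw [e1, e2, e3, hC, hk]
  field_simp
  have h' : r * α * p + r ^ 2 + α ^ 3 * q ≠ 0 := by intro h0; apply h; linarith
  linear_combination (A * Ea α (r * x)) * (mul_inv_cancel₀ h')
end
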